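/- The symmetric bilinear form B on 𝔪 = 𝔤/𝔥 defined on the basis z̄, b̄, ē, x̄₂, x̄₃, x̄₄ by B(z̄, ē) = B(ē, z̄) = 1/2, B(x̄₂, x̄₄) = B(x̄₄, x̄₂) = 1/2, B(b̄, b̄) = −1, B(x̄₃, x̄₃) = −1, and B = 0 on all other pairs of basis vectors, is non-degenerate of signature (2,4), is J-Hermitian, i.e. B(Ju, Jv) = B(u, v) for all u, v ∈ 𝔪, and is invariant under the isotropy representation: B(ρ(X)u, v) + B(u, ρ(X)v) = 0 for all X ∈ 𝔥 and u, v ∈ 𝔪. -/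

import Mathlib

noncomputable section

/-- The underlying space of the 9-dimensional Lie algebra `𝔤`; coordinates are taken
with respect to the ordered basis `z, b, x₁, x₂, x₃, x₄, h, e, f`
(so index 0 = z, 1 = b, 2 = x₁, 3 = x₂, 4 = x₃, 5 = x₄, 6 = h, 7 = e, 8 = f). -/
def G : Type := Fin 9 → ℝ

instance : AddCommGroup G := inferInstanceAs (AddCommGroup (Fin 9 → ℝ))
instance : Module ℝ G := inferInstanceAs (Module ℝ (Fin 9 → ℝ))

@[simp] lemma G.add_apply (u v : G) (k : Fin 9) : (u + v) k = u k + v k := rfl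
@[simp] lemma G.smul_apply (c : ℝ) (u : G) (k : Fin 9) : (c • u) k = c * u k := rfl
@[simp] lemma G.zero_apply (k : Fin 9) : (0 : G) k = 0 := rfl

/-- The Lie bracket of `𝔤` determined by `[b,xᵢ] = xᵢ`, `[b,z] = 2z`, `[h,x₁] = −3x₁`,
`[h,x₂] = −x₂`, `[h,x₃] = x₃`, `[h,x₄] = 3x₄`, `[f,x₂] = −3x₁`, `[f,x₃] = −2x₂`,
`[f,x₄] = −x₃`, `[e,x₁] = x₂`, `[e,x₂] = 2x₃`, `[e,x₃] = 3x₄`, `[x₁,x₄] = z`,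
`[x₂,x₃] = −3z`, `[h,f] = −2f`, `[h,e] = 2e`, `[f,e] = h`, all other brackets of
basis elements being zero. -/
def gb (u v : G) : G := fun k =>
  match k with
  | 0 => -2*(u 0*v 1 - u 1*v 0) + (u 2*v 5 - u 5*v 2) - 3*(u 3*v 4 - u 4*v 3)
  | 1 => 0
  | 2 => (u 1*v 2 - u 2*v 1) + 3*(u 2*v 6 - u 6*v 2) + 3*(u 3*v 8 - u 8*v 3)
  | 3 => (u 1*v 3 - u 3*v 1) - (u 2*v 7 - u 7*v 2) + (u 3*v 6 - u 6*v 3) + 2*(u 4*v 8 - u 8*v 4)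
  | 4 => (u 1*v 4 - u 4*v 1) - 2*(u 3*v 7 - u 7*v 3) - (u 4*v 6 - u 6*v 4) + (u 5*v 8 - u 8*v 5)
  | 5 => (u 1*v 5 - u 5*v 1) - 3*(u 4*v 7 - u 7*v 4) - 3*(u 5*v 6 - u 6*v 5)
  | 6 => -(u 7*v 8 - u 8*v 7)
  | 7 => 2*(u 6*v 7 - u 7*v 6)
  | 8 => -2*(u 6*v 8 - u 8*v 6)

instance : LieRing G where
  bracket := gb
  add_lie := by intro x y z; funext k; fin_cases k <;> simp only [gb, G.add_apply] <;> ring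
  lie_add := by intro x y z; funext k; fin_cases k <;> simp only [gb, G.add_apply] <;> ring
  lie_self := by intro x; funext k; fin_cases k <;> simp only [gb, G.zero_apply] <;> ring
  leibniz_lie := by intro x y z; funext k; fin_cases k <;> simp only [gb, G.add_apply] <;> ring

lemma G.lie_def (u v : G) : ⁅u, v⁆ = gb u v := rfl

instance : LieAlgebra ℝ G where
  lie_smul := by
    intro c x y; funext k
    rw [G.lie_def, G.lie_def]
    fin_cases k <;> simp only [gb, G.smul_apply] <;> ring

/-- basis vector `z` -/ def zv : G := Pi.single 0 1
/-- basis vector `b` -/ def bv : G := Pi.single 1 1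
/-- basis vector `x₁` -/ def x1v : G := Pi.single 2 1
/-- basis vector `x₂` -/ def x2v : G := Pi.single 3 1
/-- basis vector `x₃` -/ def x3v : G := Pi.single 4 1
/-- basis vector `x₄` -/ def x4v : G := Pi.single 5 1
/-- basis vector `h` -/ def hv : G := Pi.single 6 1
/-- basis vector `e` -/ def ev : G := Pi.single 7 1
/-- basis vector `f` -/ def fv : G := Pi.single 8 1


/-- The subalgebra `𝔥 = span{x₁, h − b, f − z}` (as a subspace of `𝔤`). -/
def Hsub : Submodule ℝ G := Submodule.span ℝ {x1v, hv - bv, fv - zv}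

/-- The quotient map `π : 𝔤 → 𝔪 = 𝔤/𝔥`. -/
def pr : G →ₗ[ℝ] G ⧸ Hsub := Hsub.mkQ

/-- The defining values of the invariant almost complex structure `J` on `𝔪 = 𝔤/𝔥`:
`J z̄ = x̄₂`, `J b̄ = −x̄₃`, `J ē = x̄₄`, `J x̄₂ = −z̄`, `J x̄₃ = b̄`, `J x̄₄ = −ē`. -/
def IsJ (J : Module.End ℝ (G ⧸ Hsub)) : Prop :=
  J (pr zv) = pr x2v ∧ J (pr bv) = -pr x3v ∧ J (pr ev) = pr x4v ∧
  J (pr x2v) = -pr zv ∧ J (pr x3v) = pr bv ∧ J (pr x4v) = -pr ev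

/-- The ordered basis `z̄, b̄, ē, x̄₂, x̄₃, x̄₄` of `𝔪 = 𝔤/𝔥`. -/
def mbas : Fin 6 → G ⧸ Hsub := ![pr zv, pr bv, pr ev, pr x2v, pr x3v, pr x4v]

/-- The Gram matrix of the invariant pseudo-Hermitian metric `B` in the basis
`z̄, b̄, ē, x̄₂, x̄₃, x̄₄`: `B(z̄,ē) = 1/2`, `B(x̄₂,x̄₄) = 1/2`, `B(b̄,b̄) = −1`,
`B(x̄₃,x̄₃) = −1`, and `B = 0` on all other pairs of basis vectors. -/
def Bmat : Matrix (Fin 6) (Fin 6) ℝ :=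
  !![0,    0, 1/2,   0,  0,   0;
     0,   -1,   0,   0,  0,   0;
     1/2,  0,   0,   0,  0,   0;
     0,    0,   0,   0,  0, 1/2;
     0,    0,   0,   0, -1,   0;
     0,    0,   0, 1/2,  0,   0]

/-- The defining values of the bilinear form `B` on `𝔪`. -/
def IsB (B : LinearMap.BilinForm ℝ (G ⧸ Hsub)) : Prop :=
  ∀ i j : Fin 6, B (mbas i) (mbas j) = Bmat i j

/-!
Since `π x₁ = 0`, `π h = b̄` and `π f = z̄`, `B(πu, πv)` is an explicit bilinear expression in
the coordinates of `u, v ∈ 𝔤`. In it, `z̄ ± ē`, `x̄₂ ± x̄₄`, `b̄`, `x̄₃` are pairwise orthogonal with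
squares `1, 1, −1, −1, −1, −1`. Being non-isotropic they are independent, and as `z̄, …, x̄₄` span
`𝔪` they form a basis; this gives non-degeneracy and the signature. `J`-hermiticity is checked on
the basis `z̄, …, x̄₄`, and invariance on the three generators of `𝔥`, the condition being linear
in `X`.
-/

open Module

section InfinitesimalIsometries

variable {R L M : Type*} [CommRing R] [LieRing L] [LieAlgebra R L] [AddCommGroup M] [Module R M]

/-- For `p = π : 𝔤 → 𝔤/𝔥`, `X` lies in this submodule iff the isotropy action `ρ(X)` is `B`-skew. -/
def infinitesimalIsometries (p : L →ₗ[R] M) (B : LinearMap.BilinForm R M) : Submodule R L where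
  carrier := {X | ∀ u v, B (p ⁅X, u⁆) (p v) + B (p u) (p ⁅X, v⁆) = 0}
  zero_mem' := by simp
  add_mem' {X Y} hX hY u v := by
    simp only [add_lie, map_add, LinearMap.add_apply]
    linear_combination hX u v + hY u v
  smul_mem' c X hX u v := by
    simp only [smul_lie, map_smul, LinearMap.smul_apply, smul_eq_mul]
    linear_combination c * hX u v

end InfinitesimalIsometries

theorem finrank_eq_card_of_linearIndependent_of_span_eq_top {K V ι ι' : Type*} [Field K]
    [AddCommGroup V] [Module K V] [Fintype ι] [Fintype ι'] {v : ι → V} {s : ι' → V}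
    (hv : LinearIndependent K v) (hs : Submodule.span K (Set.range s) = ⊤)
    (hcard : Fintype.card ι' ≤ Fintype.card ι) : finrank K V = Fintype.card ι := by
  have : Module.Finite K V := Module.finite_def.2 (hs ▸ Submodule.fg_span (Set.finite_range s))
  refine le_antisymm ?_ hv.fintype_card_le_finrank
  calc finrank K V = finrank K (Submodule.span K (Set.range s)) := by rw [hs, finrank_top]
    _ ≤ Fintype.card ι' := finrank_range_le_card s
    _ ≤ Fintype.card ι := hcard

lemma G.sub_apply (u v : G) (k : Fin 9) : (u - v) k = u k - v k := rfl

lemma pr_x1v : pr x1v = 0 :=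
  (Submodule.Quotient.mk_eq_zero _).2 (Submodule.subset_span (by simp))

lemma pr_hv : pr hv = pr bv :=
  sub_eq_zero.1 <| (map_sub pr _ _).symm.trans <|
    (Submodule.Quotient.mk_eq_zero _).2 (Submodule.subset_span (by simp))

lemma pr_fv : pr fv = pr zv :=
  sub_eq_zero.1 <| (map_sub pr _ _).symm.trans <|
    (Submodule.Quotient.mk_eq_zero _).2 (Submodule.subset_span (by simp))

lemma pr_eq_sum_mbas (w : G) :
    pr w = (w 0 + w 8) • mbas 0 + (w 1 + w 6) • mbas 1 + w 7 • mbas 2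
      + w 3 • mbas 3 + w 4 • mbas 4 + w 5 • mbas 5 := by
  have hw : w = w 0 • zv + w 1 • bv + w 2 • x1v + w 3 • x2v + w 4 • x3v + w 5 • x4v
      + w 6 • hv + w 7 • ev + w 8 • fv := by
    funext k
    simp only [G.add_apply, G.smul_apply]
    fin_cases k <;> simp [zv, bv, x1v, x2v, x3v, x4v, hv, ev, fv]
  conv_lhs => rw [hw]
  simp only [map_add, map_smul, pr_x1v, pr_hv, pr_fv, mbas, Matrix.cons_val]
  module

lemma span_range_mbas : Submodule.span ℝ (Set.range mbas) = ⊤ := by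
  refine eq_top_iff.2 fun q _ => ?_
  obtain ⟨w, rfl⟩ := Submodule.mkQ_surjective Hsub q
  rw [← pr, pr_eq_sum_mbas]
  have hmem (i : Fin 6) : mbas i ∈ Submodule.span ℝ (Set.range mbas) :=
    Submodule.subset_span ⟨i, rfl⟩
  repeat' apply add_mem
  all_goals exact Submodule.smul_mem _ _ (hmem _)

lemma IsB.apply_pr {B : LinearMap.BilinForm ℝ (G ⧸ Hsub)} (hB : IsB B) (u v : G) :
    B (pr u) (pr v) = ((u 0 + u 8) * v 7 + u 7 * (v 0 + v 8)) / 2 - (u 1 + u 6) * (v 1 + v 6)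
      + (u 3 * v 5 + u 5 * v 3) / 2 - u 4 * v 4 := by
  rw [IsB] at hB
  rw [pr_eq_sum_mbas u, pr_eq_sum_mbas v]
  simp only [map_add, map_smul, LinearMap.add_apply, LinearMap.smul_apply, smul_eq_mul, hB]
  simp only [Bmat, Matrix.of_apply, Matrix.cons_val]
  ring

/-- `z̄ ± ē` and `x̄₂ ± x̄₄` diagonalise the two hyperbolic planes of `B`. -/
def sylvesterFrame : Fin 6 → G ⧸ Hsub :=
  ![pr (zv + ev), pr (x2v + x4v), pr (zv - ev), pr (x2v - x4v), pr bv, pr x3v]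

section FixedForm

variable {B : LinearMap.BilinForm ℝ (G ⧸ Hsub)} (hB : IsB B)
include hB

lemma IsB.apply_sylvesterFrame (i j : Fin 6) :
    B (sylvesterFrame i) (sylvesterFrame j) =
      if i = j then (if (i : ℕ) < 2 then 1 else -1) else 0 := by
  fin_cases i <;> fin_cases j <;>
    simp only [Fin.reduceFinMk, sylvesterFrame, Matrix.cons_val, hB.apply_pr, G.add_apply,
      G.sub_apply] <;>
    simp [zv, bv, ev, x2v, x3v, x4v]

lemma IsB.iIsOrtho_sylvesterFrame : B.iIsOrtho sylvesterFrame :=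
  LinearMap.BilinForm.iIsOrtho_def.2 fun i j hij => by rw [hB.apply_sylvesterFrame, if_neg hij]

lemma IsB.apply_sylvesterFrame_self_ne_zero (i : Fin 6) :
    B (sylvesterFrame i) (sylvesterFrame i) ≠ 0 := by
  rw [hB.apply_sylvesterFrame, if_pos rfl]
  split_ifs <;> norm_num

lemma IsB.linearIndependent_sylvesterFrame : LinearIndependent ℝ sylvesterFrame :=
  LinearMap.BilinForm.linearIndependent_of_iIsOrtho hB.iIsOrtho_sylvesterFrame
    hB.apply_sylvesterFrame_self_ne_zero

lemma IsB.finrank_eq : finrank ℝ (G ⧸ Hsub) = 6 := by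
  simpa using finrank_eq_card_of_linearIndependent_of_span_eq_top
    hB.linearIndependent_sylvesterFrame span_range_mbas le_rfl

lemma IsB.apply_J_mbas_J_mbas {J : Module.End ℝ (G ⧸ Hsub)} (hJ : IsJ J) (i j : Fin 6) :
    B (J (mbas i)) (J (mbas j)) = B (mbas i) (mbas j) := by
  obtain ⟨hz, hb, he, hx₂, hx₃, hx₄⟩ := hJ
  fin_cases i <;> fin_cases j <;>
    simp only [Fin.reduceFinMk, mbas, Matrix.cons_val, hz, hb, he, hx₂, hx₃, hx₄, map_neg,
      LinearMap.neg_apply, hB.apply_pr] <;>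
    simp [zv, bv, ev, x2v, x3v, x4v]

lemma IsB.hsub_le_infinitesimalIsometries : Hsub ≤ infinitesimalIsometries pr B := by
  refine Submodule.span_le.2 fun X hX u v => ?_
  simp only [Set.mem_insert_iff, Set.mem_singleton_iff] at hX
  rcases hX with rfl | rfl | rfl <;>
    simp only [hB.apply_pr, G.lie_def, gb, G.sub_apply] <;>
    simp only [x1v, hv, bv, fv, zv, Pi.single_apply, Fin.reduceEq, reduceIte] <;> ring

end FixedForm

theorem stmt10_general (B : LinearMap.BilinForm ℝ (G ⧸ Hsub)) (hB : IsB B)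
    (J : Module.End ℝ (G ⧸ Hsub)) (hJ : IsJ J) :
    -- `B` is non-degenerate
    (∀ u : G ⧸ Hsub, (∀ v : G ⧸ Hsub, B u v = 0) → u = 0) ∧
    -- of signature `(2,4)`
    (∃ g : Module.Basis (Fin 6) ℝ (G ⧸ Hsub), ∀ i j : Fin 6,
      B (g i) (g j) = if i = j then (if (i : ℕ) < 2 then 1 else -1) else 0) ∧
    -- `J`-Hermitian
    (∀ u v : G ⧸ Hsub, B (J u) (J v) = B u v) ∧
    -- and invariant under the isotropy representation
    (∀ X ∈ Hsub, ∀ u v : G, B (pr ⁅X, u⁆) (pr v) + B (pr u) (pr ⁅X, v⁆) = 0) := by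
  have hcard : Fintype.card (Fin 6) = finrank ℝ (G ⧸ Hsub) := by simp [hB.finrank_eq]
  let g := basisOfLinearIndependentOfCardEqFinrank hB.linearIndependent_sylvesterFrame hcard
  let m := basisOfTopLeSpanOfCardEqFinrank mbas span_range_mbas.ge hcard
  have hg : ⇑g = sylvesterFrame := coe_basisOfLinearIndependentOfCardEqFinrank _ _
  have hm : ⇑m = mbas := coe_basisOfTopLeSpanOfCardEqFinrank _ _ _
  have hJB : B.compl₁₂ J J = B :=
    LinearMap.BilinForm.ext_basis m fun i j => by simpa [hm] using hB.apply_J_mbas_J_mbas hJ i j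
  refine ⟨?_, ⟨g, hg ▸ hB.apply_sylvesterFrame⟩, fun u v => congr($hJB u v),
    fun X hX => hB.hsub_le_infinitesimalIsometries hX⟩
  refine ((LinearMap.BilinForm.iIsOrtho.nondegenerate_iff_not_isOrtho_basis_self B g ?_).2 ?_).1
  · exact hg ▸ hB.iIsOrtho_sylvesterFrame
  · exact hg ▸ hB.apply_sylvesterFrame_self_ne_zero

/-- The symmetric bilinear form `B` on `𝔪 = 𝔤/𝔥` defined on the basis
`z̄, b̄, ē, x̄₂, x̄₃, x̄₄` by `B(z̄,ē) = 1/2`, `B(x̄₂,x̄₄) = 1/2`, `B(b̄,b̄) = −1`,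
`B(x̄₃,x̄₃) = −1` (and `B = 0` on all other pairs of basis vectors) is non-degenerate of
signature `(2,4)`, is `J`-Hermitian (`B(Ju,Jv) = B(u,v)`), and is invariant under the
isotropy representation (`B(ρ(X)u, v) + B(u, ρ(X)v) = 0`). -/
theorem stmt10 (B : LinearMap.BilinForm ℝ (G ⧸ Hsub))
    (hBsymm : ∀ u v : G ⧸ Hsub, B u v = B v u) (hB : IsB B)
    (J : Module.End ℝ (G ⧸ Hsub)) (hJ : IsJ J) :
    -- `B` is non-degenerate
    (∀ u : G ⧸ Hsub, (∀ v : G ⧸ Hsub, B u v = 0) → u = 0) ∧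
    -- of signature `(2,4)`
    (∃ g : Module.Basis (Fin 6) ℝ (G ⧸ Hsub), ∀ i j : Fin 6,
      B (g i) (g j) = if i = j then (if (i : ℕ) < 2 then 1 else -1) else 0) ∧
    -- `J`-Hermitian
    (∀ u v : G ⧸ Hsub, B (J u) (J v) = B u v) ∧
    -- and invariant under the isotropy representation
    (∀ X ∈ Hsub, ∀ u v : G, B (pr ⁅X, u⁆) (pr v) + B (pr u) (pr ⁅X, v⁆) = 0) :=
  stmt10_general B hB J hJ
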